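/- For all n ≥ 2, a permutation π of {1,…,n} satisfies ssc(π) = n−1 if and only if π ends with the suffix n,1 (that is, π_{n−1} = n and π_n = 1). -/

import Mathlib

/-- The largest letter of a word (`0` for the empty word). -/
def listMax (l : List ℕ) : ℕ := l.foldr max 0

lemma listMax_mem {l : List ℕ} (h : l ≠ []) : listMax l ∈ l := by
  induction l with
  | nil => simp at h
  | cons a t ih =>
    rcases eq_or_ne t [] with rfl | ht
    · simp [listMax]
    · have ht' := ih ht
      have hcons : listMax (a :: t) = max a (listMax t) := rfl
      rcases le_total a (listMax t) with hle | hle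
      · rw [hcons, max_eq_right hle]; exact List.mem_cons_of_mem _ ht'
      · rw [hcons, max_eq_left hle]; exact List.mem_cons_self

/-- The stack-sorting operator `S`: `S` of the empty word is the empty word, and
if `π` is nonempty, writing `π = L·m·R` where `m` is the greatest letter of `π`,
then `S(π) = S(L)·S(R)·m`. -/
def stackSort : List ℕ → List ℕ
  | [] => []
  | x :: xs =>
    stackSort ((x :: xs).take ((x :: xs).idxOf (listMax (x :: xs)))) ++
      stackSort ((x :: xs).drop ((x :: xs).idxOf (listMax (x :: xs)) + 1)) ++
      [listMax (x :: xs)]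
termination_by l => l.length
decreasing_by
  · have hm : listMax (x :: xs) ∈ x :: xs := listMax_mem (by simp)
    have hi : (x :: xs).idxOf (listMax (x :: xs)) < (x :: xs).length :=
      List.idxOf_lt_length_iff.mpr hm
    simp only [List.length_take, List.length_cons] at *
    omega
  · simp only [List.length_drop, List.length_cons]
    omega

/-- `π` is a permutation of `{1, …, n}`, viewed as a word containing each of
`1, …, n` exactly once. -/
def IsPermWord (n : ℕ) (π : List ℕ) : Prop := π.Perm (List.range' 1 n)

/-- The stack-sorting complexity of `π`: the least `k ≥ 0` such that `S^k(π)`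
is the identity word `1, 2, …, n` (where `n` is the length of `π`). -/
noncomputable def ssc (π : List ℕ) : ℕ :=
  sInf {k : ℕ | stackSort^[k] π = List.range' 1 π.length}

/-!
Write a permutation `π` of `{1,…,n}` as `L·n·R`. Then `S^(k+1)(π) = S^k(S(L)·S(R))·n`, and
`τ = S(L)·S(R)` is a permutation of `{1,…,n-1}`. Hence `n - 1` passes always sort `π`, and, by
induction on `n`, `n - 2` passes fail to sort `π` exactly when `τ` ends with `n-1, 1`. Since
`S(w)` always ends with the largest letter of `w`, `τ` ends with `1` only if `R` is nonempty
with maximum `1`, i.e. `R = 1`; conversely, if `R = 1` then `L` is a permutation of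
`{2,…,n-1}`, so `τ = S(L)·1` ends with `n-1, 1`.
-/

open scoped List

lemma le_listMax {l : List ℕ} {x : ℕ} (h : x ∈ l) : x ≤ listMax l := by
  induction l with
  | nil => simp at h
  | cons a t ih =>
    rcases List.mem_cons.mp h with rfl | h
    · exact le_max_left _ _
    · exact (ih h).trans (le_max_right _ _)

lemma listMax_eq_of_forall_le {l : List ℕ} {m : ℕ} (hm : m ∈ l) (hle : ∀ x ∈ l, x ≤ m) :
    listMax l = m :=
  le_antisymm (hle _ (listMax_mem (List.ne_nil_of_mem hm))) (le_listMax hm)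

lemma listMax_of_perm_range' {l : List ℕ} {s n : ℕ} (h : l ~ List.range' s (n + 1)) :
    listMax l = s + n :=
  listMax_eq_of_forall_le (h.mem_iff.2 (List.mem_range'_1.2 ⟨by omega, by omega⟩))
    fun x hx => by have := List.mem_range'_1.1 (h.mem_iff.1 hx); omega

@[simp]
lemma stackSort_nil : stackSort [] = [] := by
  rw [stackSort]

lemma stackSort_of_ne_nil {l : List ℕ} (h : l ≠ []) :
    stackSort l = stackSort (l.take (l.idxOf (listMax l))) ++
      stackSort (l.drop (l.idxOf (listMax l) + 1)) ++ [listMax l] := by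
  cases l with
  | nil => exact absurd rfl h
  | cons x xs => rw [stackSort]

lemma stackSort_append_cons {L R : List ℕ} {m : ℕ} (hL : ∀ x ∈ L, x < m)
    (hR : ∀ x ∈ R, x ≤ m) : stackSort (L ++ m :: R) = stackSort L ++ stackSort R ++ [m] := by
  have hmax : listMax (L ++ m :: R) = m := by
    refine listMax_eq_of_forall_le (by simp) fun x hx => ?_
    simp only [List.mem_append, List.mem_cons] at hx
    rcases hx with hx | rfl | hx
    · exact (hL x hx).le
    · exact le_rfl
    · exact hR x hx
  have hidx : (L ++ m :: R).idxOf m = L.length := by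
    rw [List.idxOf_append_of_notMem fun h => (hL m h).false, List.idxOf_cons_self, add_zero]
  rw [stackSort_of_ne_nil (by simp), hmax, hidx]
  simp

lemma stackSort_perm (l : List ℕ) : stackSort l ~ l := by
  induction l using stackSort.induct with
  | case1 => simp
  | case2 x xs ihL ihR =>
    rw [stackSort_of_ne_nil (List.cons_ne_nil x xs)]
    set l := x :: xs
    set i := l.idxOf (listMax l)
    have hget : l[i]'(List.idxOf_lt_length_iff.2 (listMax_mem (by simp))) = listMax l :=
      List.getElem_idxOf _
    calc _ ~ l.take i ++ l.drop (i + 1) ++ [listMax l] := (ihL.append ihR).append_right _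
      _ ~ l.take i ++ listMax l :: l.drop (i + 1) := by
        rw [List.append_assoc]; exact (List.perm_append_singleton _ _).append_left _
      _ = l := by rw [← hget, List.getElem_cons_drop, List.take_append_drop]

lemma stackSort_append_singleton {l : List ℕ} {m : ℕ} (h : ∀ x ∈ l, x < m) :
    stackSort (l ++ [m]) = stackSort l ++ [m] := by
  simpa using stackSort_append_cons (R := []) h (by simp)

@[simp]
lemma stackSort_singleton (a : ℕ) : stackSort [a] = [a] := by
  simpa using stackSort_append_singleton (l := []) (m := a) (by simp)

lemma stackSort_iterate_perm (k : ℕ) (l : List ℕ) : stackSort^[k] l ~ l := by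
  induction k with
  | zero => rfl
  | succ k ih =>
    rw [Function.iterate_succ_apply']
    exact (stackSort_perm _).trans ih

lemma stackSort_iterate_append_singleton {l : List ℕ} {m : ℕ} (h : ∀ x ∈ l, x < m) (k : ℕ) :
    stackSort^[k] (l ++ [m]) = stackSort^[k] l ++ [m] := by
  induction k with
  | zero => rfl
  | succ k ih =>
    rw [Function.iterate_succ_apply', Function.iterate_succ_apply', ih]
    exact stackSort_append_singleton fun x hx => h x ((stackSort_iterate_perm k l).mem_iff.1 hx)

lemma stackSort_range' (s n : ℕ) : stackSort (List.range' s n) = List.range' s n := by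
  induction n with
  | zero => simp
  | succ n ih =>
    rw [List.range'_concat, stackSort_append_singleton, ih]
    intro x hx
    have := List.mem_range'_1.1 hx
    omega

lemma ssc_eq_succ_iff (π : List ℕ) (k : ℕ) :
    ssc π = k + 1 ↔ stackSort^[k + 1] π = List.range' 1 π.length ∧
      stackSort^[k] π ≠ List.range' 1 π.length := by
  refine Nat.sInf_upward_closed_eq_succ_iff (fun k₁ k₂ hk h => ?_) k
  rw [Set.mem_ofPred_eq, ← Nat.sub_add_cancel hk, Function.iterate_add_apply, h]
  exact Function.iterate_fixed (stackSort_range' _ _) _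

lemma range'_one_concat (n : ℕ) : List.range' 1 (n + 1) = List.range' 1 n ++ [n + 1] := by
  rw [List.range'_concat, one_mul, add_comm]

lemma exists_stackSort_eq_append_of_perm_range' {l : List ℕ} {s n : ℕ}
    (h : l ~ List.range' s (n + 1)) : ∃ t, stackSort l = t ++ [s + n] := by
  have hne : l ≠ [] := by rintro rfl; simpa using h.length_eq
  exact ⟨_, (stackSort_of_ne_nil hne).trans (by rw [listMax_of_perm_range' h])⟩

lemma exists_eq_append_cons_of_perm_range' {π : List ℕ} {n : ℕ}
    (hπ : π ~ List.range' 1 (n + 1)) : ∃ L R, π = L ++ (n + 1) :: R ∧ L ++ R ~ List.range' 1 n := by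
  have hrange : List.range' 1 (n + 1) ~ (n + 1) :: List.range' 1 n := by
    rw [range'_one_concat]
    exact List.perm_append_singleton _ _
  obtain ⟨L, R, rfl⟩ := List.append_of_mem (hπ.mem_iff.2 (hrange.mem_iff.2 List.mem_cons_self))
  exact ⟨L, R, rfl, (List.perm_middle.symm.trans (hπ.trans hrange)).cons_inv⟩

lemma stackSort_iterate_succ_append_cons {L R : List ℕ} {n : ℕ} (h : L ++ R ~ List.range' 1 n)
    (k : ℕ) : stackSort^[k + 1] (L ++ (n + 1) :: R) =
      stackSort^[k] (stackSort L ++ stackSort R) ++ [n + 1] := by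
  have hlt : ∀ x ∈ L ++ R, x < n + 1 := fun x hx => by
    have := List.mem_range'_1.1 (h.mem_iff.1 hx); omega
  rw [Function.iterate_succ_apply,
    stackSort_append_cons (fun x hx => hlt x (List.mem_append_left R hx))
      (fun x hx => (hlt x (List.mem_append_right L hx)).le),
    stackSort_iterate_append_singleton]
  exact fun x hx => hlt x (((stackSort_perm L).append (stackSort_perm R)).mem_iff.1 hx)

lemma stackSort_iterate_of_perm_range' {π : List ℕ} {n : ℕ} (hπ : π ~ List.range' 1 (n + 1)) :
    stackSort^[n] π = List.range' 1 (n + 1) := by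
  induction n generalizing π with
  | zero => simpa using hπ
  | succ n ih =>
    obtain ⟨L, R, rfl, hLR⟩ := exists_eq_append_cons_of_perm_range' hπ
    rw [stackSort_iterate_succ_append_cons hLR,
      ih (((stackSort_perm L).append (stackSort_perm R)).trans hLR), range'_one_concat (n + 1)]

lemma suffix_pair_iff_of_nodup {α : Type*} {L R : List α} {m a : α} (h : (L ++ m :: R).Nodup) :
    [m, a] <:+ L ++ m :: R ↔ R = [a] := by
  have hm : m ∉ L ++ R := (List.nodup_cons.1 (List.perm_middle.nodup_iff.1 h)).1
  constructor
  · rintro ⟨w, hw⟩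
    exact ((List.append_cons_inj_of_notMem (fun h => hm (List.mem_append_left R h))
      (fun h => hm (List.mem_append_right L h))).1 hw.symm).2.2
  · rintro rfl
    exact List.suffix_append L [m, a]

lemma suffix_stackSort_append_iff {L R : List ℕ} {n : ℕ} (h : L ++ R ~ List.range' 1 (n + 2)) :
    [n + 2, 1] <:+ stackSort L ++ stackSort R ↔ R = [1] := by
  constructor
  · rintro ⟨w, hw⟩
    rcases eq_or_ne R [] with rfl | hR
    · obtain ⟨t, ht⟩ := exists_stackSort_eq_append_of_perm_range' (by simpa using h)
      have := congrArg List.getLast? hw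
      simp [ht] at this
    · obtain ⟨t, ht⟩ : ∃ t, stackSort R = t ++ [listMax R] := ⟨_, stackSort_of_ne_nil hR⟩
      have hmax : listMax R = 1 := by
        have := congrArg List.getLast? hw
        simpa [ht] using this.symm
      have hnd : R.Nodup :=
        (h.nodup_iff.2 List.nodup_range').sublist (List.sublist_append_right L R)
      refine List.perm_singleton.1
        ((List.perm_ext_iff_of_nodup hnd (List.nodup_singleton 1)).2 fun x => ⟨fun hx => ?_, ?_⟩)
      · have := List.mem_range'_1.1 (h.mem_iff.1 (List.mem_append_right L hx))
        have := le_listMax hx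
        simp only [List.mem_singleton]
        omega
      · rintro hx
        rw [List.eq_of_mem_singleton hx, ← hmax]
        exact listMax_mem hR
  · rintro rfl
    have hL : L ~ List.range' 2 (n + 1) := by
      rw [List.range'_succ] at h
      exact ((List.perm_append_singleton 1 L).symm.trans h).cons_inv
    obtain ⟨t, ht⟩ := exists_stackSort_eq_append_of_perm_range' hL
    exact ⟨t, by simp [ht, add_comm]⟩

lemma stackSort_iterate_ne_iff {π : List ℕ} {n : ℕ} (hπ : π ~ List.range' 1 (n + 2)) :
    stackSort^[n] π ≠ List.range' 1 (n + 2) ↔ [n + 2, 1] <:+ π := by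
  induction n generalizing π with
  | zero =>
    obtain ⟨L, R, rfl, hLR⟩ := exists_eq_append_cons_of_perm_range' hπ
    rcases List.append_eq_singleton_iff.1 (List.perm_singleton.1 hLR) with ⟨rfl, rfl⟩ | ⟨rfl, rfl⟩
      <;> decide
  | succ n ih =>
    obtain ⟨L, R, rfl, hLR⟩ := exists_eq_append_cons_of_perm_range' hπ
    rw [stackSort_iterate_succ_append_cons hLR, range'_one_concat (n + 2), Ne,
      List.append_left_inj, ← Ne, ih (((stackSort_perm L).append (stackSort_perm R)).trans hLR),
      suffix_stackSort_append_iff hLR, suffix_pair_iff_of_nodup (hπ.nodup_iff.2 List.nodup_range')]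

/-- For all `n ≥ 2`, a permutation `π` of `{1,…,n}` satisfies `ssc(π) = n−1`
if and only if `π` ends with the suffix `n, 1`. -/
theorem ssc_eq_n_sub_one_iff (n : ℕ) (hn : 2 ≤ n) (π : List ℕ) (hπ : IsPermWord n π) :
    ssc π = n - 1 ↔ ∃ w : List ℕ, π = w ++ [n, 1] := by
  obtain ⟨n, rfl⟩ := Nat.exists_eq_add_of_le' hn
  have hπ : π ~ List.range' 1 (n + 2) := hπ
  rw [show n + 2 - 1 = n + 1 by omega, ssc_eq_succ_iff, hπ.length_eq, List.length_range',
    stackSort_iterate_of_perm_range' hπ, and_iff_right rfl, stackSort_iterate_ne_iff hπ]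
  exact exists_congr fun w => eq_comm
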